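/- Let ≻_kbo be the Knuth–Bendix order with weight function w and precedence ≫. For all terms s, t and every substitution σ: if |s| − |t| > 0 as a linear expression (meaning σ'(|s|−|t|) > 0 for all grounding substitutions σ'), then sσ ≻_kbo tσ. -/

import Mathlib

/-- First-order terms over a signature `F` of function symbols and variables `V`. -/
inductive Trm (F V : Type) : Type where
  | var : V → Trm F V
  | app : F → List (Trm F V) → Trm F V

namespace Trm

/-- Applying a substitution (a map from variables to terms) homomorphically to a term. -/
def subst {F V : Type} (σ : V → Trm F V) : Trm F V → Trm F V
  | var x => σ x
  | app f ts => app f (ts.attach.map fun ⟨t, _⟩ => subst σ t)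

/-- The weight `|t|` of a term, viewed as a linear expression over the variables:
we represent the linear expression by its evaluation under an assignment `ν` of
(weight) values to the variables.  `w` is the weight function on function symbols. -/
def wt {F V : Type} (w : F → ℕ) (ν : V → ℕ) : Trm F V → ℕ
  | var x => ν x
  | app f ts => w f + ((ts.attach.map fun ⟨t, _⟩ => wt w ν t).sum)

/-- The Knuth–Bendix order with weight function `w`, minimal constant weight `w0`, and
precedence `prec` (`prec f g` means `f ≫ g`).  A side condition `|s| - |t| > 0`
(resp. `≳ 0`) on linear weight expressions is rendered as: for every grounding
assignment `ν` of weights (each at least `w0`) to the variables, the evaluated weight of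
`s` is greater (resp. at least) that of `t`.  (K3) is stated via a decomposition of the
argument lists into a common prefix `u`, the first differing pair `a, b`, and tails. -/
inductive KBO {F V : Type} (w : F → ℕ) (w0 : ℕ) (prec : F → F → Prop) :
    Trm F V → Trm F V → Prop where
  | k1 {s t : Trm F V} :
      (∀ ν : V → ℕ, (∀ x, w0 ≤ ν x) → wt w ν t < wt w ν s) → KBO w w0 prec s t
  | k2 {f g : F} {ss ts : List (Trm F V)} :
      (∀ ν : V → ℕ, (∀ x, w0 ≤ ν x) → wt w ν (app g ts) ≤ wt w ν (app f ss)) →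
      prec f g → KBO w w0 prec (app f ss) (app g ts)
  | k3 {f : F} {u ss ts : List (Trm F V)} {a b : Trm F V} :
      (∀ ν : V → ℕ, (∀ x, w0 ≤ ν x) →
        wt w ν (app f (u ++ b :: ts)) ≤ wt w ν (app f (u ++ a :: ss))) →
      ss.length = ts.length →
      KBO w w0 prec a b →
      KBO w w0 prec (app f (u ++ a :: ss)) (app f (u ++ b :: ts))

theorem wt_app {F V : Type} (w : F → ℕ) (ν : V → ℕ) (f : F) (ts : List (Trm F V)) :
    wt w ν (app f ts) = w f + (ts.map (wt w ν)).sum := by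
  rw [wt]
  exact congrArg (w f + List.sum ·) (List.attach_map_val (l := ts) (f := wt w ν))

theorem subst_app {F V : Type} (σ : V → Trm F V) (f : F) (ts : List (Trm F V)) :
    subst σ (app f ts) = app f (ts.map (subst σ)) := by
  rw [subst]
  exact congrArg (app f) (List.attach_map_val (l := ts) (f := subst σ))

theorem wt_subst {F V : Type} (w : F → ℕ) (ν : V → ℕ) (σ : V → Trm F V) :
    ∀ u : Trm F V, wt w ν (subst σ u) = wt w (fun x => wt w ν (σ x)) u
  | var x => by rw [subst, wt]
  | app f ts => by
      rw [subst_app, wt_app, wt_app, List.map_map]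
      congr 2
      exact List.map_congr_left fun u _ => wt_subst w ν σ u

theorem kbo_subst_of_weight_gt_general {F V : Type} (w : F → ℕ) (w0 : ℕ) (prec : F → F → Prop)
    (hmin : ∀ ν : V → ℕ, (∀ x, w0 ≤ ν x) → ∀ u : Trm F V, w0 ≤ wt w ν u)
    (s t : Trm F V) (σ : V → Trm F V)
    (h : ∀ ν : V → ℕ, (∀ x, w0 ≤ ν x) → wt w ν t < wt w ν s) :
    KBO w w0 prec (subst σ s) (subst σ t) :=
  -- `x ↦ |xσ|` is again a grounding, since every term weighs at least `w0`.
  KBO.k1 fun ν hν => by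
    rw [wt_subst, wt_subst]
    exact h _ fun x => hmin ν hν (σ x)

/-- If `|s| - |t| > 0` as a linear expression (i.e. under every grounding
assignment of weights, each at least `w0`, the weight of `s` strictly exceeds that of `t`),
then `sσ ≻_kbo tσ` for every substitution `σ`.  The standard admissibility conditions
(positive minimal weight `w0` bounding all term weights from below, and a strict total
precedence) are assumed. -/
theorem kbo_subst_of_weight_gt {F V : Type} (w : F → ℕ) (w0 : ℕ) (prec : F → F → Prop)
    (hw0 : 0 < w0)
    (hmin : ∀ ν : V → ℕ, (∀ x, w0 ≤ ν x) → ∀ u : Trm F V, w0 ≤ wt w ν u)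
    (hprec_trans : ∀ f g h : F, prec f g → prec g h → prec f h)
    (hprec_irrefl : ∀ f : F, ¬ prec f f)
    (hprec_total : ∀ f g : F, f ≠ g → prec f g ∨ prec g f)
    (s t : Trm F V) (σ : V → Trm F V)
    (h : ∀ ν : V → ℕ, (∀ x, w0 ≤ ν x) → wt w ν t < wt w ν s) :
    KBO w w0 prec (subst σ s) (subst σ t) :=
  kbo_subst_of_weight_gt_general w w0 prec hmin s t σ h

end Trm
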